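/- arXiv:2112.10897 — 5 statements merged into one kernel-verified Lean document; each statement's English description precedes it below -/
import Mathlib

section
/- For a Lipschitz function F : ℝ^(N×n) → ℝ, the convex deficiency integrand cd_F(z) := sup { ⟨F'(ξ), z⟩ : ξ a point of differentiability of F } satisfies cd_F(z) = sup { (F(ξ + t z) - F(ξ))/t : ξ ∈ ℝ^(N×n), t > 0 } for every z ∈ ℝ^(N×n). -/
open scoped RealInnerProductSpace

open MeasureTheory Filter Set

private lemma tendsto_add_punctured (s : ℝ) :
    Tendsto (fun ε : ℝ => s + ε) (nhdsWithin 0 (Set.Ioi 0)) (nhdsWithin s {s}ᶜ) := by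
  rw [tendsto_nhdsWithin_iff]
  constructor
  · have h1 : Tendsto (fun ε : ℝ => s + ε) (nhds 0) (nhds (s + 0)) :=
      tendsto_const_nhds.add tendsto_id
    rw [add_zero] at h1
    exact h1.mono_left nhdsWithin_le_nhds
  · filter_upwards [self_mem_nhdsWithin] with ε hε
    have hε' : (0:ℝ) < ε := hε
    simp only [Set.mem_compl_iff, Set.mem_singleton_iff]
    intro h
    linarith

private lemma key_line {E : Type*} [NormedAddCommGroup E] [NormedSpace ℝ E]
    [MeasurableSpace E] [BorelSpace E]
    {L : NNReal} {F : E → ℝ} (hF : LipschitzWith L F) (z x : E) {t : ℝ} (ht : 0 < t)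
    {M : ℝ} (hM : ∀ p, DifferentiableAt ℝ F p → fderiv ℝ F p z ≤ M)
    (hx : ∀ᵐ s : ℝ, DifferentiableAt ℝ F (x + s • z)) :
    F (x + t • z) - F x ≤ t * M := by
  set g : ℝ → ℝ := fun s => F (x + s • z) with hgdef
  have contg : Continuous g :=
    hF.continuous.comp (continuous_const.add (continuous_id.smul continuous_const))
  set φ : ℝ → ℝ := fun s => fderiv ℝ F (x + s • z) z with hφdef
  have measφ : Measurable φ := by
    have h1 : Measurable fun p : E => fderiv ℝ F p z := measurable_fderiv_apply_const ℝ F z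
    exact h1.comp (continuous_const.add (continuous_id.smul continuous_const)).measurable
  have φbound : ∀ s, ‖φ s‖ ≤ (L : ℝ) * ‖z‖ := by
    intro s
    calc ‖φ s‖ ≤ ‖fderiv ℝ F (x + s • z)‖ * ‖z‖ := (fderiv ℝ F _).le_opNorm z
    _ ≤ (L : ℝ) * ‖z‖ := by
        gcongr
        exact norm_fderiv_le_of_lipschitz ℝ hF
  have intφ : IntervalIntegrable φ volume 0 t := by
    rw [intervalIntegrable_iff]
    exact Measure.integrableOn_of_bounded measure_Ioc_lt_top.ne
      measφ.aestronglyMeasurable (ae_of_all _ φbound)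
  have hderiv : ∀ s : ℝ, DifferentiableAt ℝ F (x + s • z) → HasDerivAt g (φ s) s := by
    intro s hs
    have hline : HasDerivAt (fun u : ℝ => x + u • z) z s := by
      simpa using ((hasDerivAt_id s).smul_const z).const_add x
    exact hs.hasFDerivAt.comp_hasDerivAt s hline
  set H : ℝ → ℝ := fun u => ∫ v in (0:ℝ)..u, g v with hHdef
  have Hderiv : ∀ u : ℝ, HasDerivAt H (g u) u := fun u =>
    intervalIntegral.integral_hasDerivAt_right (contg.intervalIntegrable 0 u)
      (contg.stronglyMeasurableAtFilter _ _) contg.continuousAt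
  have intid : ∀ ε : ℝ, (∫ s in (0:ℝ)..t, (g (s + ε) - g s)) = (H (t+ε) - H t) - (H (0+ε) - H 0) := by
    intro ε
    have i1 : IntervalIntegrable (fun s => g (s+ε)) volume 0 t :=
      (contg.comp (continuous_id.add continuous_const)).intervalIntegrable _ _
    rw [intervalIntegral.integral_sub i1 (contg.intervalIntegrable 0 t),
      intervalIntegral.integral_comp_add_right g ε]
    have h1 : H (t+ε) - H (0+ε) = ∫ v in (0+ε)..(t+ε), g v :=
      intervalIntegral.integral_interval_sub_left (contg.intervalIntegrable 0 (t+ε))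
        (contg.intervalIntegrable 0 (0+ε))
    have h0 : H 0 = 0 := intervalIntegral.integral_same
    have h2 : H t = ∫ v in (0:ℝ)..t, g v := rfl
    rw [← h2, ← h1, h0]
    ring
  have hsu : ∀ u : ℝ, Tendsto (fun ε => (H (u+ε) - H u)/ε) (nhdsWithin 0 (Set.Ioi 0)) (nhds (g u)) := by
    intro u
    have h1 := (hasDerivAt_iff_tendsto_slope.1 (Hderiv u)).comp (tendsto_add_punctured u)
    refine h1.congr fun ε => ?_
    simp [Function.comp, slope_def_field, add_sub_cancel_left]
  have limA : Tendsto (fun ε => ∫ s in (0:ℝ)..t, (g (s+ε) - g s)/ε) (nhdsWithin 0 (Set.Ioi 0))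
      (nhds (g t - g 0)) := by
    refine ((hsu t).sub (hsu 0)).congr fun ε => ?_
    rw [intervalIntegral.integral_div, intid ε]
    ring
  have limB : Tendsto (fun ε => ∫ s in (0:ℝ)..t, (g (s+ε) - g s)/ε) (nhdsWithin 0 (Set.Ioi 0))
      (nhds (∫ s in (0:ℝ)..t, φ s)) := by
    apply intervalIntegral.tendsto_integral_filter_of_dominated_convergence
      (bound := fun _ => (L:ℝ) * ‖z‖)
    · filter_upwards with ε
      exact (((contg.comp (continuous_id.add continuous_const)).sub contg).div_const
        ε).aestronglyMeasurable
    · filter_upwards [self_mem_nhdsWithin] with ε hε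
      have hε : (0:ℝ) < ε := hε
      refine ae_of_all _ fun s _ => ?_
      rw [norm_div, Real.norm_eq_abs ε, abs_of_pos hε, div_le_iff₀ hε]
      have hd : dist (x+(s+ε)•z) (x+s•z) = ε * ‖z‖ := by
        rw [dist_eq_norm]
        have : x + (s+ε)•z - (x + s•z) = ε • z := by
          rw [add_smul]; abel
        rw [this, norm_smul, Real.norm_eq_abs, abs_of_pos hε]
      calc ‖g (s+ε) - g s‖ = dist (F (x+(s+ε)•z)) (F (x+s•z)) := by
            rw [Real.dist_eq]; rfl
        _ ≤ (L:ℝ) * (ε * ‖z‖) := by rw [← hd]; exact hF.dist_le_mul _ _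
        _ = (L:ℝ) * ‖z‖ * ε := by ring
    · exact intervalIntegrable_const
    · filter_upwards [hx] with s hs _
      have h1 := (hasDerivAt_iff_tendsto_slope.1 (hderiv s hs)).comp (tendsto_add_punctured s)
      refine h1.congr fun ε => ?_
      simp [Function.comp, slope_def_field, add_sub_cancel_left]
  have keyeq : g t - g 0 = ∫ s in (0:ℝ)..t, φ s := tendsto_nhds_unique limA limB
  have final : (∫ s in (0:ℝ)..t, φ s) ≤ ∫ _ in (0:ℝ)..t, M := by
    refine intervalIntegral.integral_mono_ae_restrict ht.le intφ intervalIntegrable_const ?_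
    exact ae_restrict_of_ae (hx.mono fun s hs => hM _ hs)
  rw [intervalIntegral.integral_const, smul_eq_mul, sub_zero] at final
  have hg0 : g 0 = F x := by simp [hgdef]
  have hgt : g t = F (x + t • z) := rfl
  rw [← hgt, ← hg0, keyeq]
  exact final

private lemma dense_good_points {E : Type*} [NormedAddCommGroup E] [NormedSpace ℝ E]
    [MeasurableSpace E] [BorelSpace E] [FiniteDimensional ℝ E]
    (μ : Measure E) [μ.IsAddHaarMeasure] [SFinite μ]
    {L : NNReal} {F : E → ℝ} (hF : LipschitzWith L F) (z : E) :
    Dense {x : E | ∀ᵐ s : ℝ, DifferentiableAt ℝ F (x + s • z)} := by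
  have hDmeas : MeasurableSet {p : E | DifferentiableAt ℝ F p} :=
    measurableSet_of_differentiableAt ℝ F
  have hnull : μ {p : E | ¬ DifferentiableAt ℝ F p} = 0 := by
    have h := hF.ae_differentiableAt (μ := μ)
    rwa [ae_iff] at h
  have hcont : Continuous (fun q : E × ℝ => q.1 + q.2 • z) :=
    continuous_fst.add (continuous_snd.smul continuous_const)
  have hBmeas : MeasurableSet {q : E × ℝ | ¬ DifferentiableAt ℝ F (q.1 + q.2 • z)} :=
    hcont.measurable hDmeas.compl
  have hprod : ∀ᵐ q : E × ℝ ∂(μ.prod volume), DifferentiableAt ℝ F (q.1 + q.2 • z) := by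
    rw [ae_iff]
    have hswap : (μ.prod (volume : Measure ℝ)) {q : E × ℝ | ¬ DifferentiableAt ℝ F (q.1 + q.2 • z)}
        = ((volume : Measure ℝ).prod μ)
          (Prod.swap ⁻¹' {q : E × ℝ | ¬ DifferentiableAt ℝ F (q.1 + q.2 • z)}) := by
      rw [← Measure.prod_swap, Measure.map_apply measurable_swap hBmeas]
    rw [hswap]
    rw [Measure.measure_prod_null (measurable_swap hBmeas)]
    refine Filter.Eventually.of_forall fun s => ?_
    show μ (Prod.mk s ⁻¹' (Prod.swap ⁻¹' {q : E × ℝ | ¬ DifferentiableAt ℝ F (q.1 + q.2 • z)})) = 0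
    have heq : (Prod.mk s ⁻¹' (Prod.swap ⁻¹' {q : E × ℝ | ¬ DifferentiableAt ℝ F (q.1 + q.2 • z)}))
        = (fun x : E => x + s • z) ⁻¹' {p : E | ¬ DifferentiableAt ℝ F p} := rfl
    rw [heq, measure_preimage_add_right μ (s • z), hnull]
  have hae : ∀ᵐ x ∂μ, ∀ᵐ s : ℝ, DifferentiableAt ℝ F (x + s • z) :=
    Measure.ae_ae_of_ae_prod hprod
  exact Measure.dense_of_ae hae

/-- For Lipschitz `F : ℝ^(N×n) → ℝ`, the convex deficiency integrand
`cd_F(z) = sup { ⟨F'(ξ), z⟩ : ξ a point of differentiability of F }` coincides with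
`sup { (F(ξ + t z) - F(ξ))/t : ξ, t > 0 }`. -/
theorem convex_deficiency_two_defs (N n : ℕ) (L : NNReal)
    (F : EuclideanSpace ℝ (Fin N × Fin n) → ℝ) (hF : LipschitzWith L F)
    (z : EuclideanSpace ℝ (Fin N × Fin n)) :
    sSup {y : ℝ | ∃ ξ : EuclideanSpace ℝ (Fin N × Fin n),
        DifferentiableAt ℝ F ξ ∧ y = ⟪gradient F ξ, z⟫} =
      sSup {y : ℝ | ∃ (ξ : EuclideanSpace ℝ (Fin N × Fin n)) (t : ℝ),
        0 < t ∧ y = (F (ξ + t • z) - F ξ) / t} := by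
  set S1 := {y : ℝ | ∃ ξ : EuclideanSpace ℝ (Fin N × Fin n),
    DifferentiableAt ℝ F ξ ∧ y = ⟪gradient F ξ, z⟫} with hS1def
  set S2 := {y : ℝ | ∃ (ξ : EuclideanSpace ℝ (Fin N × Fin n)) (t : ℝ),
    0 < t ∧ y = (F (ξ + t • z) - F ξ) / t} with hS2def
  have hgrad : ∀ ξ : EuclideanSpace ℝ (Fin N × Fin n),
      ⟪gradient F ξ, z⟫ = fderiv ℝ F ξ z := by
    intro ξ
    unfold gradient
    exact InnerProductSpace.toDual_symm_apply
  have bdd1 : BddAbove S1 := by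
    refine ⟨(L : ℝ) * ‖z‖, ?_⟩
    rintro y ⟨ξ, hξ, rfl⟩
    rw [hgrad ξ]
    calc fderiv ℝ F ξ z ≤ ‖fderiv ℝ F ξ z‖ := le_abs_self _
      _ ≤ ‖fderiv ℝ F ξ‖ * ‖z‖ := (fderiv ℝ F ξ).le_opNorm z
      _ ≤ (L : ℝ) * ‖z‖ := by gcongr; exact norm_fderiv_le_of_lipschitz ℝ hF
  have bdd2 : BddAbove S2 := by
    refine ⟨(L : ℝ) * ‖z‖, ?_⟩
    rintro y ⟨ξ, t, ht, rfl⟩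
    rw [div_le_iff₀ ht]
    have hd : dist (ξ + t • z) ξ = t * ‖z‖ := by
      rw [dist_eq_norm, add_sub_cancel_left, norm_smul, Real.norm_eq_abs, abs_of_pos ht]
    calc F (ξ + t • z) - F ξ ≤ |F (ξ + t • z) - F ξ| := le_abs_self _
      _ = dist (F (ξ + t • z)) (F ξ) := (Real.dist_eq _ _).symm
      _ ≤ (L : ℝ) * dist (ξ + t • z) ξ := hF.dist_le_mul _ _
      _ = (L : ℝ) * ‖z‖ * t := by rw [hd]; ring
  have hne1 : S1.Nonempty := by
    have h := hF.ae_differentiableAt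
      (μ := (volume : Measure (EuclideanSpace ℝ (Fin N × Fin n))))
    obtain ⟨ξ, hξ⟩ := h.exists
    exact ⟨_, ξ, hξ, rfl⟩
  have hne2 : S2.Nonempty := ⟨(F (0 + (1:ℝ) • z) - F 0) / 1, 0, 1, one_pos, rfl⟩
  apply le_antisymm
  · refine csSup_le hne1 ?_
    rintro y ⟨ξ, hξ, rfl⟩
    rw [hgrad ξ]
    have hline : HasDerivAt (fun u : ℝ => ξ + u • z) z 0 := by
      simpa using ((hasDerivAt_id (0:ℝ)).smul_const z).const_add ξ
    have hFd : HasFDerivAt F (fderiv ℝ F ξ) (ξ + (0:ℝ) • z) := by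
      simpa using hξ.hasFDerivAt
    have hg : HasDerivAt (fun u : ℝ => F (ξ + u • z)) (fderiv ℝ F ξ z) 0 :=
      hFd.comp_hasDerivAt 0 hline
    have hslope := (hasDerivAt_iff_tendsto_slope.1 hg).mono_left
      (nhdsWithin_mono 0 (fun u (hu : u ∈ Set.Ioi (0:ℝ)) => ne_of_gt hu))
    refine le_of_tendsto hslope ?_
    filter_upwards [self_mem_nhdsWithin] with ε (hε : ε ∈ Set.Ioi (0:ℝ))
    have hsl : slope (fun u : ℝ => F (ξ + u • z)) 0 ε = (F (ξ + ε • z) - F ξ) / ε := by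
      simp [slope_def_field]
    rw [hsl]
    exact le_csSup bdd2 ⟨ξ, ε, hε, rfl⟩
  · refine csSup_le hne2 ?_
    rintro y ⟨ξ, t, ht, rfl⟩
    rw [div_le_iff₀ ht]
    have hM : ∀ p : EuclideanSpace ℝ (Fin N × Fin n),
        DifferentiableAt ℝ F p → fderiv ℝ F p z ≤ sSup S1 :=
      fun p hp => le_csSup bdd1 ⟨p, hp, (hgrad p).symm⟩
    have hdense := dense_good_points
      (volume : Measure (EuclideanSpace ℝ (Fin N × Fin n))) hF z
    have hclosed : IsClosed {x : EuclideanSpace ℝ (Fin N × Fin n) |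
        F (x + t • z) - F x ≤ t * sSup S1} :=
      isClosed_le (((hF.continuous.comp (continuous_id.add continuous_const)).sub
        hF.continuous)) continuous_const
    have hsub : {x : EuclideanSpace ℝ (Fin N × Fin n) |
          ∀ᵐ s : ℝ, DifferentiableAt ℝ F (x + s • z)}
        ⊆ {x : EuclideanSpace ℝ (Fin N × Fin n) | F (x + t • z) - F x ≤ t * sSup S1} :=
      fun x hx => key_line hF z x ht hM hx
    have hx : ξ ∈ {x : EuclideanSpace ℝ (Fin N × Fin n) |
        F (x + t • z) - F x ≤ t * sSup S1} :=
      hclosed.closure_subset_iff.2 hsub (hdense ξ)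
    calc F (ξ + t • z) - F ξ ≤ t * sSup S1 := hx
      _ = sSup S1 * t := mul_comm _ _
end

section
/- For a Lipschitz function F : ℝ^(N×n) → ℝ, the function cd_F(z) = sup { (F(ξ + t z) - F(ξ))/t : ξ ∈ ℝ^(N×n), t > 0 } is convex. -/
/-- The convex deficiency integrand via difference quotients. -/
noncomputable def cdF {N n : ℕ} (F : EuclideanSpace ℝ (Fin N × Fin n) → ℝ)
    (z : EuclideanSpace ℝ (Fin N × Fin n)) : ℝ :=
  sSup {y : ℝ | ∃ (ξ : EuclideanSpace ℝ (Fin N × Fin n)) (t : ℝ),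
    0 < t ∧ y = (F (ξ + t • z) - F ξ) / t}

/-- for Lipschitz `F`, `cd_F` is convex. -/
theorem cdF_convex (N n : ℕ) (L : NNReal)
    (F : EuclideanSpace ℝ (Fin N × Fin n) → ℝ) (hF : LipschitzWith L F) :
    ConvexOn ℝ Set.univ (cdF F) := by
  set S : EuclideanSpace ℝ (Fin N × Fin n) → Set ℝ := fun z =>
    {y : ℝ | ∃ (ξ : EuclideanSpace ℝ (Fin N × Fin n)) (t : ℝ),
      0 < t ∧ y = (F (ξ + t • z) - F ξ) / t} with hS
  have hbdd : ∀ z, BddAbove (S z) := by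
    intro z
    refine ⟨L * ‖z‖, ?_⟩
    rintro y ⟨ξ, t, ht, rfl⟩
    rw [div_le_iff₀ ht]
    calc F (ξ + t • z) - F ξ ≤ |F (ξ + t • z) - F ξ| := le_abs_self _
      _ ≤ L * ‖ξ + t • z - ξ‖ := by
          have := hF.dist_le_mul (ξ + t • z) ξ
          simpa [Real.dist_eq, dist_eq_norm] using this
      _ = L * ‖z‖ * t := by
          rw [add_sub_cancel_left, norm_smul]
          simp [abs_of_pos ht]; ring
  have hne : ∀ z, (S z).Nonempty := fun z =>
    ⟨(F (0 + (1:ℝ) • z) - F 0) / 1, 0, 1, one_pos, rfl⟩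
  have hle : ∀ z ξ t, 0 < t → (F (ξ + t • z) - F ξ) / t ≤ cdF F z :=
    fun z ξ t ht => le_csSup (hbdd z) ⟨ξ, t, ht, rfl⟩
  refine ⟨convex_univ, ?_⟩
  intro x _ y _ a b ha hb hab
  rcases eq_or_lt_of_le ha with ha0 | ha0
  · have hb1 : b = 1 := by linarith
    simp [← ha0, hb1]
  rcases eq_or_lt_of_le hb with hb0 | hb0
  · have ha1 : a = 1 := by linarith
    simp [← hb0, ha1]
  apply csSup_le (hne _)
  rintro w ⟨ξ, t, ht, rfl⟩
  have key : ξ + t • (a • x + b • y) = (ξ + (t * b) • y) + (t * a) • x := by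
    module
  rw [key]
  have h1 := hle x (ξ + (t * b) • y) (t * a) (mul_pos ht ha0)
  have h2 := hle y ξ (t * b) (mul_pos ht hb0)
  rw [div_le_iff₀ (mul_pos ht ha0)] at h1
  rw [div_le_iff₀ (mul_pos ht hb0)] at h2
  rw [div_le_iff₀ ht]
  simp only [smul_eq_mul]
  nlinarith [h1, h2]
end

section
/- Let F : ℝ^(N×n) → ℝ be Lipschitz and rank-one convex (i.e., t ↦ F(ξ + t a⊗b) is convex for all ξ and all vectors a ∈ ℝ^N, b ∈ ℝ^n), and suppose F^∞(z) = lim_{t→∞} F(tz)/t exists for all z. Then for every matrix z of rank at most one, F^∞(z) = cd_F(z). -/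
open Filter

/-- The rank-one matrix `a ⊗ b`, viewed as an element of `ℝ^(N×n)`. -/
noncomputable def tensor {N n : ℕ} (a : Fin N → ℝ) (b : Fin n → ℝ) :
    EuclideanSpace ℝ (Fin N × Fin n) :=
  WithLp.toLp 2 (fun p : Fin N × Fin n => a p.1 * b p.2)

/-!
Along a rank-one line `s ↦ F (ξ + s • z)` the function `F` is convex, so its difference
quotients from `s = 0` increase with `s`. Since `|F (ξ + s • z) - F (s • z)| ≤ L ‖ξ‖`, these
quotients converge to `F^∞(z)` for every base point `ξ`. Hence `F^∞(z)` bounds every quotient in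
the supremum defining `cd_F(z)`, and it is the limit of those with `ξ = 0`.
-/

open Topology

theorem ConvexOn.slope_le_of_tendsto_atTop {f : ℝ → ℝ} (hf : ConvexOn ℝ Set.univ f) {x l : ℝ}
    (h : Tendsto (slope f x) atTop (𝓝 l)) {y : ℝ} (hy : y ≠ x) : slope f x y ≤ l := by
  refine ge_of_tendsto h ?_
  filter_upwards [eventually_ge_atTop y, eventually_ne_atTop x] with w hyw hw
  exact hf.slope_mono (Set.mem_univ x) ⟨Set.mem_univ y, hy⟩ ⟨Set.mem_univ w, hw⟩ hyw

theorem LipschitzWith.tendsto_slope_line_atTop {E : Type*} [SeminormedAddCommGroup E]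
    [Module ℝ E] {L : NNReal} {F : E → ℝ} (hF : LipschitzWith L F) {z : E} {l : ℝ}
    (hrec : Tendsto (fun t : ℝ => F (t • z) / t) atTop (𝓝 l)) (ξ : E) :
    Tendsto (slope (fun t : ℝ => F (ξ + t • z)) 0) atTop (𝓝 l) := by
  have hshift : Tendsto (fun t : ℝ => (F (ξ + t • z) - F (t • z)) * t⁻¹) atTop (𝓝 0) := by
    refine isBoundedUnder_le_mul_tendsto_zero ⟨L * ‖ξ‖, eventually_map.2 <| .of_forall fun t => ?_⟩
      tendsto_inv_atTop_zero
    simpa [dist_eq_norm] using hF.dist_le_mul (ξ + t • z) (t • z)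
  have hconst : Tendsto (fun t : ℝ => F ξ / t) atTop (𝓝 0) :=
    tendsto_const_nhds.div_atTop tendsto_id
  convert (hrec.add hshift).sub hconst using 2 with t
  · simp only [slope_def_field, zero_smul, add_zero, sub_zero]
    ring
  · simp

theorem cdF_eq_of_forall_le_of_tendsto {N n : ℕ} {F : EuclideanSpace ℝ (Fin N × Fin n) → ℝ}
    {z : EuclideanSpace ℝ (Fin N × Fin n)} {l : ℝ}
    (hle : ∀ ξ (t : ℝ), 0 < t → (F (ξ + t • z) - F ξ) / t ≤ l)
    (ξ : EuclideanSpace ℝ (Fin N × Fin n))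
    (htend : Tendsto (fun t : ℝ => (F (ξ + t • z) - F ξ) / t) atTop (𝓝 l)) : cdF F z = l := by
  refine IsLUB.csSup_eq ⟨?_, fun b hb => ?_⟩ ⟨_, ξ, 1, one_pos, rfl⟩
  · rintro _ ⟨ξ, t, ht, rfl⟩
    exact hle ξ t ht
  · refine le_of_tendsto htend ?_
    filter_upwards [eventually_gt_atTop 0] with t ht
    exact hb ⟨ξ, t, ht, rfl⟩

/-- for `F` Lipschitz and rank-one convex with recession function
`F^∞`, one has `F^∞(z) = cd_F(z)` for every matrix `z` of rank at most one. -/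
theorem cdF_eq_recession_on_rank_one (N n : ℕ) (L : NNReal)
    (F Finf : EuclideanSpace ℝ (Fin N × Fin n) → ℝ) (hF : LipschitzWith L F)
    (hrc : ∀ (ξ : EuclideanSpace ℝ (Fin N × Fin n)) (a : Fin N → ℝ) (b : Fin n → ℝ),
      ConvexOn ℝ Set.univ (fun t : ℝ => F (ξ + t • tensor a b)))
    (hrec : ∀ z, Tendsto (fun t : ℝ => F (t • z) / t) atTop (nhds (Finf z)))
    (z : EuclideanSpace ℝ (Fin N × Fin n))
    (hz : ∃ (a : Fin N → ℝ) (b : Fin n → ℝ), z = tensor a b) :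
    Finf z = cdF F z := by
  obtain ⟨a, b, rfl⟩ := hz
  have hslope ξ := hF.tendsto_slope_line_atTop (hrec (tensor a b)) ξ
  refine (cdF_eq_of_forall_le_of_tendsto (fun ξ t ht => ?_) 0 ?_).symm
  · simpa [slope_def_field] using (hrc ξ a b).slope_le_of_tendsto_atTop (hslope ξ) ht.ne'
  · simpa [slope_fun_def_field] using hslope 0
end

section
/- Let F : ℝ^(N×n) → ℝ be Lipschitz, μ a probability measure on ℝ^(N×n) with finite first moment and barycenter b(μ), σ a finite positive measure on the unit sphere of ℝ^(N×n), and t > 0. Suppose that for every ε > 0 and every ξ where F is differentiable one has (F(ξ + ε b(μ) + ε t z̄) - F(ξ))/ε ≤ ∫ (F(ξ + ε w) - F(ξ))/ε dμ(w) + t ∫ F^∞ dσ where z̄ is the barycenter of σ and F^∞ exists. Then ⟨F'(ξ), z̄⟩ ≤ ∫ F^∞ dσ for every differentiability point ξ, and consequently cd_F(z̄) ≤ ∫ F^∞ dσ. -/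
/-!
At a differentiability point `ξ` of `F`, both difference quotients in the hypothesis converge as
`ε → 0⁺`: the left one to `F'(ξ)(b + t z̄)`, the right one, by dominated convergence with the
Lipschitz majorant `L ‖w‖`, to `∫ F'(ξ) w dμ = F'(ξ) b` with `b = ∫ w dμ`. Cancelling the barycenter term `F'(ξ) b`
and dividing by `t` leaves `F'(ξ) z̄ ≤ ∫ F^∞ dσ`. By Rademacher's theorem `F` has differentiability
points, so the supremum defining `cd_F(z̄)` is over a nonempty set and obeys the same bound.
-/

open MeasureTheory Filter Topology
open scoped RealInnerProductSpace

variable {E : Type*} [NormedAddCommGroup E] [NormedSpace ℝ E]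

theorem DifferentiableAt.tendsto_slope_zero_right {F : E → ℝ} {ξ : E}
    (hξ : DifferentiableAt ℝ F ξ) (v : E) :
    Tendsto (fun ε : ℝ => (F (ξ + ε • v) - F ξ) / ε) (𝓝[>] 0) (𝓝 (fderiv ℝ F ξ v)) := by
  simpa only [smul_eq_mul, inv_mul_eq_div] using
    (hξ.hasFDerivAt.hasLineDerivAt v).tendsto_slope_zero_right

theorem LipschitzWith.norm_slope_le {L : NNReal} {F : E → ℝ} (hF : LipschitzWith L F)
    (ξ w : E) {ε : ℝ} (hε : ε ≠ 0) :
    ‖(F (ξ + ε • w) - F ξ) / ε‖ ≤ L * ‖w‖ := by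
  have hdist := hF.dist_le_mul (ξ + ε • w) ξ
  rw [dist_eq_norm, dist_eq_norm, add_sub_cancel_left, norm_smul] at hdist
  rw [norm_div, div_le_iff₀ (norm_pos_iff.2 hε)]
  linarith

theorem LipschitzWith.tendsto_integral_slope_zero_right [MeasurableSpace E]
    [OpensMeasurableSpace E] [CompleteSpace E] {L : NNReal} {F : E → ℝ}
    (hF : LipschitzWith L F) {μ : Measure E} (hμ : Integrable (fun w => w) μ) {ξ : E}
    (hξ : DifferentiableAt ℝ F ξ) :
    Tendsto (fun ε : ℝ => ∫ w, (F (ξ + ε • w) - F ξ) / ε ∂μ) (𝓝[>] 0)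
      (𝓝 (fderiv ℝ F ξ (∫ w, w ∂μ))) := by
  rw [← (fderiv ℝ F ξ).integral_comp_comm hμ]
  refine tendsto_integral_filter_of_dominated_convergence (fun w => L * ‖w‖)
    (Eventually.of_forall fun ε => ?_) ?_ (hμ.norm.const_mul _)
    (ae_of_all _ fun w => hξ.tendsto_slope_zero_right w)
  · have hFc := hF.continuous
    exact (by fun_prop : Continuous fun w => (F (ξ + ε • w) - F ξ) / ε).aestronglyMeasurable
  · filter_upwards [self_mem_nhdsWithin] with ε (hε : 0 < ε)
    exact ae_of_all _ fun w => hF.norm_slope_le ξ w hε.ne'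

theorem LipschitzWith.exists_differentiableAt [FiniteDimensional ℝ E] {L : NNReal}
    {F : E → ℝ} (hF : LipschitzWith L F) : ∃ ξ, DifferentiableAt ℝ F ξ := by
  borelize E
  exact (hF.ae_differentiableAt (μ := Measure.addHaar)).exists

theorem LipschitzWith.fderiv_apply_le_of_forall_slope_le [MeasurableSpace E]
    [OpensMeasurableSpace E] [CompleteSpace E] {L : NNReal} {F : E → ℝ}
    (hF : LipschitzWith L F) {μ : Measure E} (hμ : Integrable (fun w => w) μ) {ξ z : E}
    (hξ : DifferentiableAt ℝ F ξ) {t c : ℝ} (ht : 0 < t)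
    (hslope : ∀ ε : ℝ, 0 < ε →
      (F (ξ + ε • (∫ w, w ∂μ) + (ε * t) • z) - F ξ) / ε ≤
        (∫ w, (F (ξ + ε • w) - F ξ) / ε ∂μ) + t * c) :
    fderiv ℝ F ξ z ≤ c := by
  have hdir : fderiv ℝ F ξ ((∫ w, w ∂μ) + t • z) ≤ fderiv ℝ F ξ (∫ w, w ∂μ) + t * c := by
    refine le_of_tendsto_of_tendsto (hξ.tendsto_slope_zero_right _)
      ((hF.tendsto_integral_slope_zero_right hμ hξ).add_const _)
      (eventually_nhdsWithin_of_forall fun ε (hε : 0 < ε) => ?_)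
    simpa only [smul_add, smul_smul, add_assoc] using hslope ε hε
  rw [map_add, map_smul, smul_eq_mul, add_le_add_iff_left] at hdir
  exact le_of_mul_le_mul_left hdir ht

theorem rearrangement_step_general (N n : ℕ) (L : NNReal)
    (F Finf : EuclideanSpace ℝ (Fin N × Fin n) → ℝ) (hF : LipschitzWith L F)
    (μ σ : Measure (EuclideanSpace ℝ (Fin N × Fin n)))
    (hμmom : Integrable (fun w => w) μ)
    (t : ℝ) (ht : 0 < t)
    (hineq : ∀ ε : ℝ, 0 < ε → ∀ ξ, DifferentiableAt ℝ F ξ →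
      (F (ξ + ε • (∫ w, w ∂μ) + (ε * t) • (∫ w, w ∂σ)) - F ξ) / ε ≤
        (∫ w, (F (ξ + ε • w) - F ξ) / ε ∂μ) + t * ∫ w, Finf w ∂σ) :
    (∀ ξ, DifferentiableAt ℝ F ξ →
        ⟪gradient F ξ, ∫ w, w ∂σ⟫ ≤ ∫ w, Finf w ∂σ) ∧
      sSup {y : ℝ | ∃ ξ, DifferentiableAt ℝ F ξ ∧
          y = ⟪gradient F ξ, ∫ w, w ∂σ⟫} ≤ ∫ w, Finf w ∂σ := by
  have hgrad : ∀ ξ, DifferentiableAt ℝ F ξ → ⟪gradient F ξ, ∫ w, w ∂σ⟫ ≤ ∫ w, Finf w ∂σ :=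
    fun ξ hξ => (inner_gradient_left (𝕜 := ℝ)).trans_le <|
      hF.fderiv_apply_le_of_forall_slope_le hμmom hξ ht fun ε hε => hineq ε hε ξ hξ
  obtain ⟨ξ₀, hξ₀⟩ := hF.exists_differentiableAt
  refine ⟨hgrad, csSup_le ⟨_, ξ₀, hξ₀, rfl⟩ ?_⟩
  rintro y ⟨ξ, hξ, rfl⟩
  exact hgrad ξ hξ

/-- the key rearrangement step. If for all `ε > 0` and all points `ξ` of
differentiability of `F` the rescaled Jensen inequality holds, then
`⟨F'(ξ), z̄⟩ ≤ ∫ F^∞ dσ` at every differentiability point, and hence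
`cd_F(z̄) ≤ ∫ F^∞ dσ`. -/
theorem rearrangement_step (N n : ℕ) (L : NNReal)
    (F Finf : EuclideanSpace ℝ (Fin N × Fin n) → ℝ) (hF : LipschitzWith L F)
    (hrec : TendstoUniformlyOn
      (fun (t : ℝ) (z : EuclideanSpace ℝ (Fin N × Fin n)) => F (t • z) / t)
      Finf atTop (Metric.sphere 0 1))
    (μ σ : Measure (EuclideanSpace ℝ (Fin N × Fin n)))
    (hμ : IsProbabilityMeasure μ)
    (hμmom : Integrable (fun w => w) μ)
    (hσfin : IsFiniteMeasure σ)
    (hσsph : σ (Metric.sphere (0 : EuclideanSpace ℝ (Fin N × Fin n)) 1)ᶜ = 0)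
    (t : ℝ) (ht : 0 < t)
    (hineq : ∀ ε : ℝ, 0 < ε → ∀ ξ, DifferentiableAt ℝ F ξ →
      (F (ξ + ε • (∫ w, w ∂μ) + (ε * t) • (∫ w, w ∂σ)) - F ξ) / ε ≤
        (∫ w, (F (ξ + ε • w) - F ξ) / ε ∂μ) + t * ∫ w, Finf w ∂σ) :
    (∀ ξ, DifferentiableAt ℝ F ξ →
        ⟪gradient F ξ, ∫ w, w ∂σ⟫ ≤ ∫ w, Finf w ∂σ) ∧
      sSup {y : ℝ | ∃ ξ, DifferentiableAt ℝ F ξ ∧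
          y = ⟪gradient F ξ, ∫ w, w ∂σ⟫} ≤ ∫ w, Finf w ∂σ :=
  rearrangement_step_general N n L F Finf hF μ σ hμmom t ht hineq
end

section
/- Let F : ℝ^(N×n) → ℝ be separately convex (convex in each matrix entry) and bounded: |F| ≤ M on a cube ξ + [-r, r]^(N·n). Then F is Lipschitz on ξ + [-r/2, r/2]^(N·n) with Lipschitz constant c(N,n) M / r. -/
private lemma oneDimLip (g : ℝ → ℝ) (hg : ConvexOn ℝ Set.univ g) (M r a : ℝ)
    (hr : 0 < r) (hb : ∀ s, |s - a| ≤ r → |g s| ≤ M)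
    (s t : ℝ) (hs : |s - a| ≤ r / 2) (ht : |t - a| ≤ r / 2) :
    |g s - g t| ≤ 4 * M / r * |s - t| := by
  wlog h : s ≤ t generalizing s t
  · rw [abs_sub_comm (g s), abs_sub_comm s]
    exact this t s ht hs (le_of_not_ge h)
  rcases eq_or_lt_of_le h with rfl | hlt
  · simp
  obtain ⟨hs1, hs2⟩ := abs_le.mp hs
  obtain ⟨ht1, ht2⟩ := abs_le.mp ht
  obtain ⟨hgt1, hgt2⟩ := abs_le.mp (hb t (by rw [abs_le]; constructor <;> linarith))
  obtain ⟨hgs1, hgs2⟩ := abs_le.mp (hb s (by rw [abs_le]; constructor <;> linarith))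
  obtain ⟨hga1, hga2⟩ := abs_le.mp (hb (a + r) (by rw [abs_le]; constructor <;> linarith))
  obtain ⟨hgb1, hgb2⟩ := abs_le.mp (hb (a - r) (by rw [abs_le]; constructor <;> linarith))
  have key1 := hg.slope_mono_adjacent (Set.mem_univ s) (Set.mem_univ (a + r)) hlt
    (by linarith : t < a + r)
  have key2 := hg.slope_mono_adjacent (Set.mem_univ (a - r)) (Set.mem_univ t)
    (by linarith : a - r < s) hlt
  rw [div_le_div_iff₀ (by linarith) (by linarith)] at key1
  rw [div_le_div_iff₀ (by linarith) (by linarith)] at key2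
  have h1 : (g t - g s) * r ≤ 4 * M * (t - s) := by
    rcases le_or_gt (g t - g s) 0 with hc | hc
    · nlinarith
    · nlinarith
  have h2 : (g s - g t) * r ≤ 4 * M * (t - s) := by
    rcases le_or_gt (g s - g t) 0 with hc | hc
    · nlinarith
    · nlinarith
  have habs : |s - t| = t - s := by rw [abs_sub_comm]; exact abs_of_pos (by linarith)
  have e : 4 * M / r * (t - s) = 4 * M * (t - s) / r := by ring
  rw [habs, abs_le, e]
  constructor
  · rw [neg_le, neg_sub, le_div_iff₀ hr]
    exact h1
  · rw [le_div_iff₀ hr]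
    exact h2

private lemma coord_le_norm {ι : Type*} [Fintype ι] (x : EuclideanSpace ℝ ι) (p : ι) :
    |x p| ≤ ‖x‖ := by
  rw [EuclideanSpace.norm_eq]
  rw [show |x p| = Real.sqrt (|x p| ^ 2) from (Real.sqrt_sq (abs_nonneg _)).symm]
  apply Real.sqrt_le_sqrt
  rw [sq_abs]
  have := Finset.single_le_sum (f := fun i => ‖x i‖ ^ 2)
    (fun i _ => by positivity) (Finset.mem_univ p)
  simpa [Real.norm_eq_abs, sq_abs] using this


/-- a separately convex function bounded by `M` on a cube
`ξ + [-r, r]^(N·n)` is Lipschitz on the half-cube `ξ + [-r/2, r/2]^(N·n)` with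
constant `c(N,n) M / r`. -/
theorem separatelyConvex_bounded_lipschitz (N n : ℕ) :
    ∃ c : ℝ, 0 < c ∧
      ∀ (F : EuclideanSpace ℝ (Fin N × Fin n) → ℝ)
        (ξ : EuclideanSpace ℝ (Fin N × Fin n)) (M r : ℝ), 0 < M → 0 < r →
        (∀ (w : EuclideanSpace ℝ (Fin N × Fin n)) (p : Fin N × Fin n),
          ConvexOn ℝ Set.univ (fun s : ℝ => F (w + s • EuclideanSpace.single p 1))) →
        (∀ w : EuclideanSpace ℝ (Fin N × Fin n),
          (∀ p, |w p - ξ p| ≤ r) → |F w| ≤ M) →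
        ∀ w₁ w₂ : EuclideanSpace ℝ (Fin N × Fin n),
          (∀ p, |w₁ p - ξ p| ≤ r / 2) → (∀ p, |w₂ p - ξ p| ≤ r / 2) →
          |F w₁ - F w₂| ≤ c * M / r * ‖w₁ - w₂‖ := by
  classical
  refine ⟨4 * (N * n) + 1, by positivity, ?_⟩
  intro F ξ M r hM hr hconv hbd w₁ w₂ h₁ h₂
  set W : Finset (Fin N × Fin n) → EuclideanSpace ℝ (Fin N × Fin n) :=
    fun S => WithLp.toLp 2 (fun q => if q ∈ S then w₂ q else w₁ q) with hWdef
  have hWcube : ∀ (S : Finset (Fin N × Fin n)) (q : Fin N × Fin n), |W S q - ξ q| ≤ r / 2 := by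
    intro S q
    show |(if q ∈ S then w₂ q else w₁ q) - ξ q| ≤ r / 2
    split
    · exact h₂ q
    · exact h₁ q
  have hnorm : (0:ℝ) ≤ ‖w₁ - w₂‖ := norm_nonneg _
  have key : ∀ S : Finset (Fin N × Fin n),
      |F (W S) - F w₁| ≤ 4 * M / r * S.card * ‖w₁ - w₂‖ := by
    intro S
    induction S using Finset.induction_on with
    | empty =>
        have hemp : W ∅ = w₁ := by
          ext q
          show (if q ∈ (∅ : Finset (Fin N × Fin n)) then w₂ q else w₁ q) = w₁ q
          simp
        simp [hemp]
    | @insert p S hp IH =>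
        have hstep : W (insert p S) = W S + (w₂ p - w₁ p) • EuclideanSpace.single p 1 := by
          ext q
          show (if q ∈ insert p S then w₂ q else w₁ q)
            = (if q ∈ S then w₂ q else w₁ q) + (w₂ p - w₁ p) * (EuclideanSpace.single p (1:ℝ) q)
          rw [EuclideanSpace.single_apply]
          by_cases hq : q = p
          · subst hq; simp [hp]
          · simp [hq, Finset.mem_insert]
        have hWp : W S p = w₁ p := by
          show (if p ∈ S then w₂ p else w₁ p) = w₁ p
          simp [hp]
        set g : ℝ → ℝ := fun s => F (W S + s • EuclideanSpace.single p 1) with hgdef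
        have hbg : ∀ s, |s - (ξ p - W S p)| ≤ r → |g s| ≤ M := by
          intro s hsd
          apply hbd
          intro q
          show |(W S q + s * EuclideanSpace.single p (1:ℝ) q) - ξ q| ≤ r
          rw [EuclideanSpace.single_apply]
          by_cases hq : q = p
          · subst hq
            simp only [if_true, if_pos, mul_one]
            rw [show W S q + s - ξ q = s - (ξ q - W S q) by ring]
            exact hsd
          · simp only [if_neg hq, mul_zero, add_zero]
            exact le_trans (hWcube S q) (by linarith)
        have hone := oneDimLip g (hconv (W S) p) M r (ξ p - W S p) hr hbg 0 (w₂ p - w₁ p)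
          (by rw [zero_sub, abs_neg, abs_sub_comm]; exact hWcube S p)
          (by rw [hWp, show w₂ p - w₁ p - (ξ p - w₁ p) = w₂ p - ξ p by ring]; exact h₂ p)
        have hg0 : g 0 = F (W S) := by
          rw [hgdef]
          norm_num
        have hg1 : g (w₂ p - w₁ p) = F (W (insert p S)) := by rw [hgdef, hstep]
        rw [hg0, hg1, zero_sub, abs_neg] at hone
        have hco : |w₂ p - w₁ p| ≤ ‖w₁ - w₂‖ := by
          rw [abs_sub_comm, show w₁ p - w₂ p = (w₁ - w₂) p from rfl]
          exact coord_le_norm _ p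
        have hstep2 : |F (W S) - F (W (insert p S))| ≤ 4 * M / r * ‖w₁ - w₂‖ :=
          le_trans hone (mul_le_mul_of_nonneg_left hco (by positivity))
        have htri : |F (W (insert p S)) - F w₁|
            ≤ |F (W S) - F (W (insert p S))| + |F (W S) - F w₁| := by
          rw [abs_sub_comm (F (W S))]
          exact abs_sub_le _ _ _
        rw [Finset.card_insert_of_notMem hp]
        push_cast
        have hring : 4 * M / r * ((S.card : ℝ) + 1) * ‖w₁ - w₂‖
            = 4 * M / r * ‖w₁ - w₂‖ + 4 * M / r * (S.card : ℝ) * ‖w₁ - w₂‖ := by ring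
        rw [hring]
        linarith
  have huniv : W Finset.univ = w₂ := by
    ext q
    show (if q ∈ (Finset.univ : Finset (Fin N × Fin n)) then w₂ q else w₁ q) = w₂ q
    simp
  have hfin := key Finset.univ
  rw [huniv, Finset.card_univ, Fintype.card_prod, Fintype.card_fin, Fintype.card_fin] at hfin
  rw [abs_sub_comm]
  have hMr : (0:ℝ) ≤ M / r * ‖w₁ - w₂‖ := by positivity
  have : (4 * ((N:ℝ) * n) + 1) * M / r * ‖w₁ - w₂‖
      = 4 * M / r * ((N:ℝ) * n) * ‖w₁ - w₂‖ + M / r * ‖w₁ - w₂‖ := by ring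
  push_cast at hfin ⊢
  linarith
end
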